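/- arXiv:2202.12554 — 8 statements merged into one kernel-verified Lean document; each statement's English description precedes it below -/
import Mathlib

section
/- Along the compressive branch, for every ρ ∈ (ρ_r, η ρ_r) the sound speed c(ρ) = √(γ p(ρ)/ρ) satisfies dc/dρ = c_r √(ρ_r) · ((ρ − ρ_r)² + (η−1)(ρ² + ρ_r²)) / (2 ρ^{3/2} (η ρ_r − ρ)^{3/2} (η ρ − ρ_r)^{1/2}), and this derivative is strictly positive. -/
/-!
Since `γ p(ρ) / ρ = γ p_r (η ρ - ρ_r) / ((η ρ_r - ρ) ρ)`, the sound speed is `c_r √ρ_r` times the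
square root of the quotient `(η ρ - ρ_r) / ((η ρ_r - ρ) ρ)`. Differentiating `√(f / g)` gives
`(f' g - f g') / (2 g^{3/2} f^{1/2})`, and here `f' g - f g' = η ρ² - 2 ρ ρ_r + η ρ_r²`, which is
`(ρ - ρ_r)² + (η - 1)(ρ² + ρ_r²)` and hence positive as soon as `η > 1`.
-/

open Real

theorem HasDerivAt.sqrt_div {f g : ℝ → ℝ} {f' g' x : ℝ} (hf : HasDerivAt f f' x)
    (hg : HasDerivAt g g' x) (hfx : 0 < f x) (hgx : 0 < g x) :
    HasDerivAt (fun y => √(f y / g y))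
      ((f' * g x - f x * g') / (2 * g x ^ ((3 : ℝ) / 2) * f x ^ ((1 : ℝ) / 2))) x := by
  refine ((hf.div hg hgx.ne').sqrt (div_pos hfx hgx).ne').congr_deriv ?_
  have hg32 : g x ^ ((3 : ℝ) / 2) = g x * √(g x) := by
    rw [show (3 : ℝ) / 2 = 1 + 1 / 2 by norm_num, rpow_add hgx, rpow_one, sqrt_eq_rpow]
  have : 0 < √(g x) := sqrt_pos.mpr hgx
  rw [hg32, ← sqrt_eq_rpow, Pi.div_apply, sqrt_div' _ hgx.le]
  field_simp
  rw [sq_sqrt hgx.le]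
  ring

theorem stmt2_general (γ ρr pr η cr : ℝ)
    (hγ : 1 < γ) (hρr : 0 < ρr) (hpr : 0 < pr)
    (hη : η = (γ + 1) / (γ - 1))
    (hcr : cr = Real.sqrt (γ * pr / ρr))
    (p c : ℝ → ℝ)
    (hp : ∀ ρ, p ρ = pr * (η * ρ - ρr) / (η * ρr - ρ))
    (hc : ∀ ρ, c ρ = Real.sqrt (γ * p ρ / ρ)) :
    ∀ ρ ∈ Set.Ioo ρr (η * ρr),
      HasDerivAt c
        (cr * Real.sqrt ρr * ((ρ - ρr) ^ 2 + (η - 1) * (ρ ^ 2 + ρr ^ 2))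
          / (2 * ρ ^ ((3 : ℝ) / 2) * (η * ρr - ρ) ^ ((3 : ℝ) / 2)
              * (η * ρ - ρr) ^ ((1 : ℝ) / 2))) ρ
      ∧ 0 < cr * Real.sqrt ρr * ((ρ - ρr) ^ 2 + (η - 1) * (ρ ^ 2 + ρr ^ 2))
          / (2 * ρ ^ ((3 : ℝ) / 2) * (η * ρr - ρ) ^ ((3 : ℝ) / 2)
              * (η * ρ - ρr) ^ ((1 : ℝ) / 2)) := by
  rintro ρ ⟨hlo, hhi⟩
  have hη1 : 1 < η := by rw [hη, lt_div_iff₀ (by linarith)]; linarith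
  have hρ : 0 < ρ := hρr.trans hlo
  have hD : 0 < η * ρr - ρ := by linarith
  have hN : 0 < η * ρ - ρr := by nlinarith
  have hK : √(γ * pr) = cr * √ρr := by
    rw [hcr, ← sqrt_mul (by positivity), div_mul_cancel₀ _ hρr.ne']
  have hc_eq : c = fun x => √(γ * pr) * √((η * x - ρr) / ((η * ρr - x) * x)) := by
    funext x
    rw [hc, hp, ← sqrt_mul (by positivity)]
    congr 1
    simp only [div_eq_mul_inv, mul_inv]
    ring
  have hderiv := (((hasDerivAt_id' ρ).const_mul η).sub_const ρr).sqrt_div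
    (((hasDerivAt_id' ρ).const_sub (η * ρr)).fun_mul (hasDerivAt_id' ρ)) hN (mul_pos hD hρ)
  refine ⟨?_, ?_⟩
  · rw [hc_eq]
    refine (hderiv.const_mul √(γ * pr)).congr_deriv ?_
    rw [mul_rpow hD.le hρ.le, hK]
    ring
  · have : 0 < (ρ - ρr) ^ 2 + (η - 1) * (ρ ^ 2 + ρr ^ 2) := by nlinarith
    have : 0 < cr := by rw [hcr]; exact sqrt_pos.mpr (by positivity)
    have := rpow_pos_of_pos hρ ((3 : ℝ) / 2)
    have := rpow_pos_of_pos hD ((3 : ℝ) / 2)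
    have := rpow_pos_of_pos hN ((1 : ℝ) / 2)
    have := sqrt_pos.mpr hρr
    positivity

/-- Explicit derivative formula for the sound speed along the compressive branch,
and its strict positivity. -/
theorem stmt2 (γ ρr ur pr η cr : ℝ)
    (hγ : 1 < γ) (hρr : 0 < ρr) (hpr : 0 < pr)
    (hη : η = (γ + 1) / (γ - 1))
    (hcr : cr = Real.sqrt (γ * pr / ρr))
    (p u c : ℝ → ℝ)
    (hp : ∀ ρ, p ρ = pr * (η * ρ - ρr) / (η * ρr - ρ))
    (hu : ∀ ρ, u ρ = ur + cr * Real.sqrt (2 / (γ - 1)) * (ρ - ρr)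
        / Real.sqrt ((η * ρr - ρ) * ρ))
    (hc : ∀ ρ, c ρ = Real.sqrt (γ * p ρ / ρ)) :
    ∀ ρ ∈ Set.Ioo ρr (η * ρr),
      HasDerivAt c
        (cr * Real.sqrt ρr * ((ρ - ρr) ^ 2 + (η - 1) * (ρ ^ 2 + ρr ^ 2))
          / (2 * ρ ^ ((3 : ℝ) / 2) * (η * ρr - ρ) ^ ((3 : ℝ) / 2)
              * (η * ρ - ρr) ^ ((1 : ℝ) / 2))) ρ
      ∧ 0 < cr * Real.sqrt ρr * ((ρ - ρr) ^ 2 + (η - 1) * (ρ ^ 2 + ρr ^ 2))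
          / (2 * ρ ^ ((3 : ℝ) / 2) * (η * ρr - ρ) ^ ((3 : ℝ) / 2)
              * (η * ρ - ρr) ^ ((1 : ℝ) / 2)) :=
  stmt2_general γ ρr pr η cr hγ hρr hpr hη hcr p c hp hc
end

section
/- Along the compressive branch, the momentum m(ρ) = ρ u(ρ) satisfies, for every ρ ∈ (ρ_r, η ρ_r), the second derivative formula d²m/dρ² = c_r ρ_r² (√(η−1)/4) · η ρ ((3η − 4)ρ + η ρ_r)/(η ρ_r ρ − ρ²)^{5/2}, which is strictly positive; in particular ρ ↦ ρ u(ρ) is strictly convex on (ρ_r, η ρ_r). -/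
/-!
On the compressive branch the momentum is `ρ ↦ u_r ρ + K ρ (ρ - ρ_r) (a ρ - ρ²)^(-1/2)` with
`a = η ρ_r` and `K = c_r √(η - 1)` (note `2 / (γ - 1) = η - 1`). Differentiating twice and clearing
powers of `a ρ - ρ²` gives the closed form. Its factor `(3a - 4ρ_r) ρ + a ρ_r` is affine in `ρ`,
equal to `4ρ_r (a - ρ_r)` at `ρ_r` and `3a (a - ρ_r)` at `a`, hence positive on `(ρ_r, a)`, so the
momentum is strictly convex there.
-/

open Set Filter Topology

theorem HasDerivAt.mul_rpow_const_of_pos {f g : ℝ → ℝ} {f' g' x : ℝ} (s : ℝ)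
    (hf : HasDerivAt f f' x) (hg : HasDerivAt g g' x) (hgx : 0 < g x) :
    HasDerivAt (fun y => f y * g y ^ s) ((f' * g x + s * f x * g') * g x ^ (s - 1)) x := by
  refine (hf.fun_mul (hg.rpow_const (p := s) (Or.inl hgx.ne'))).congr_deriv ?_
  rw [Real.rpow_sub_one hgx.ne']
  field_simp

theorem hasDerivAt_mul_sub_sq (a x : ℝ) : HasDerivAt (fun y => a * y - y ^ 2) (a - 2 * x) x :=
  (((hasDerivAt_id' x).const_mul a).fun_sub (hasDerivAt_pow 2 x)).congr_deriv (by ring)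

noncomputable def shockMomentum (u₀ K a b x : ℝ) : ℝ :=
  u₀ * x + K * ((x ^ 2 - b * x) * (a * x - x ^ 2) ^ (-(1 / 2 : ℝ)))

section ShockMomentum

variable (u₀ K a b : ℝ) {x : ℝ}

theorem shockMomentum_eq (hx : 0 < a * x - x ^ 2) :
    shockMomentum u₀ K a b x = x * (u₀ + K * (x - b) / √((a - x) * x)) := by
  have hsqrt : 0 < √((a - x) * x) := Real.sqrt_pos.2 (by linarith)
  rw [shockMomentum, Real.rpow_neg hx.le, ← Real.sqrt_eq_rpow,
    show a * x - x ^ 2 = (a - x) * x by ring]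
  field_simp

theorem hasDerivAt_shockMomentum (hx : 0 < a * x - x ^ 2) :
    HasDerivAt (shockMomentum u₀ K a b)
      (u₀ + K * (x * (3 * a * x - 2 * x ^ 2 - a * b) / 2 * (a * x - x ^ 2) ^ (-(3 / 2 : ℝ))))
      x := by
  have hnum : HasDerivAt (fun y => y ^ 2 - b * y) (2 * x - b) x :=
    ((hasDerivAt_pow 2 x).fun_sub ((hasDerivAt_id' x).const_mul b)).congr_deriv (by ring)
  have hquot := hnum.mul_rpow_const_of_pos (-(1 / 2 : ℝ)) (hasDerivAt_mul_sub_sq a x) hx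
  refine (((hasDerivAt_id' x).const_mul u₀).fun_add (hquot.const_mul K)).congr_deriv ?_
  rw [show -(1 / 2 : ℝ) - 1 = -(3 / 2) by norm_num]
  ring

theorem hasDerivAt_deriv_shockMomentum (hx : 0 < a * x - x ^ 2) :
    HasDerivAt (deriv (shockMomentum u₀ K a b))
      (K * (a * x * ((3 * a - 4 * b) * x + a * b) / 4) / (a * x - x ^ 2) ^ (5 / 2 : ℝ)) x := by
  have hnear : ∀ᶠ y in 𝓝 x, 0 < a * y - y ^ 2 :=
    (by fun_prop : Continuous fun y => a * y - y ^ 2).continuousAt.eventually_const_lt hx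
  have hderiv : deriv (shockMomentum u₀ K a b) =ᶠ[𝓝 x] fun y =>
      u₀ + K * (y * (3 * a * y - 2 * y ^ 2 - a * b) / 2 * (a * y - y ^ 2) ^ (-(3 / 2 : ℝ))) :=
    hnear.mono fun y hy => (hasDerivAt_shockMomentum u₀ K a b hy).deriv
  have hcubic : HasDerivAt (fun y => 3 * a * y - 2 * y ^ 2 - a * b) (3 * a - 4 * x) x :=
    ((((hasDerivAt_id' x).const_mul (3 * a)).fun_sub ((hasDerivAt_pow 2 x).const_mul 2)).sub_const
      (a * b)).congr_deriv (by push_cast; ring)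
  have hnum := ((hasDerivAt_id' x).fun_mul hcubic).div_const 2
  have hquot := hnum.mul_rpow_const_of_pos (-(3 / 2 : ℝ)) (hasDerivAt_mul_sub_sq a x) hx
  refine (((hquot.const_mul K).const_add u₀).congr_deriv ?_).congr_of_eventuallyEq hderiv
  rw [show -(3 / 2 : ℝ) - 1 = -(5 / 2) by norm_num, Real.rpow_neg hx.le]
  ring

theorem shockMomentum_secondDeriv_pos (hK : 0 < K) (hb : 0 ≤ b) (hbx : b < x) (hxa : x < a) :
    0 < K * (a * x * ((3 * a - 4 * b) * x + a * b) / 4) / (a * x - x ^ 2) ^ (5 / 2 : ℝ) := by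
  have hx : 0 < x := hb.trans_lt hbx
  have hnum : 0 < (3 * a - 4 * b) * x + a * b := by
    nlinarith [mul_pos (sub_pos.2 hbx) (sub_pos.2 hxa)]
  have hden : 0 < a * x - x ^ 2 := by nlinarith
  have hax : 0 < a * x := by nlinarith
  exact div_pos (mul_pos hK (by positivity)) (Real.rpow_pos_of_pos hden _)

theorem strictConvexOn_shockMomentum (hK : 0 < K) (hb : 0 ≤ b) :
    StrictConvexOn ℝ (Ioo b a) (shockMomentum u₀ K a b) := by
  have hpos : ∀ x ∈ Ioo b a, 0 < a * x - x ^ 2 := fun x ⟨hbx, hxa⟩ => by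
    nlinarith [hb.trans_lt hbx]
  refine strictConvexOn_of_deriv2_pos (convex_Ioo b a)
    (fun x hx => (hasDerivAt_shockMomentum u₀ K a b (hpos x hx)).continuousAt.continuousWithinAt)
    fun x hx => ?_
  rw [interior_Ioo] at hx
  rw [Function.iterate_succ_apply, Function.iterate_one,
    (hasDerivAt_deriv_shockMomentum u₀ K a b (hpos x hx)).deriv]
  exact shockMomentum_secondDeriv_pos K a b hK hb hx.1 hx.2

end ShockMomentum

/-- Second derivative formula for the momentum `ρ ↦ ρ u(ρ)` along the compressive
branch, its strict positivity, and strict convexity of the momentum. -/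
theorem stmt3 (γ ρr ur pr η cr : ℝ)
    (hγ : 1 < γ) (hρr : 0 < ρr) (hpr : 0 < pr)
    (hη : η = (γ + 1) / (γ - 1))
    (hcr : cr = Real.sqrt (γ * pr / ρr))
    (u m : ℝ → ℝ)
    (hu : ∀ ρ, u ρ = ur + cr * Real.sqrt (2 / (γ - 1)) * (ρ - ρr)
        / Real.sqrt ((η * ρr - ρ) * ρ))
    (hm : ∀ ρ, m ρ = ρ * u ρ) :
    (∀ ρ ∈ Set.Ioo ρr (η * ρr),
        HasDerivAt (deriv m)
          (cr * ρr ^ 2 * (Real.sqrt (η - 1) / 4) * (η * ρ * ((3 * η - 4) * ρ + η * ρr))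
            / (η * ρr * ρ - ρ ^ 2) ^ ((5 : ℝ) / 2)) ρ
        ∧ 0 < cr * ρr ^ 2 * (Real.sqrt (η - 1) / 4) * (η * ρ * ((3 * η - 4) * ρ + η * ρr))
            / (η * ρr * ρ - ρ ^ 2) ^ ((5 : ℝ) / 2))
    ∧ StrictConvexOn ℝ (Set.Ioo ρr (η * ρr)) m := by
  have hγ1 : 0 < γ - 1 := sub_pos.2 hγ
  have hη1 : 0 < η - 1 := by
    rw [hη, sub_pos, one_lt_div hγ1]
    linarith
  have hK : 0 < cr * √(η - 1) := by
    rw [hcr]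
    exact mul_pos (Real.sqrt_pos.2 (by positivity)) (Real.sqrt_pos.2 hη1)
  have hm_eq : EqOn m (shockMomentum ur (cr * √(η - 1)) (η * ρr) ρr) (Ioo ρr (η * ρr)) := by
    intro ρ ⟨hρ, hρη⟩
    have h2 : 2 / (γ - 1) = η - 1 := by
      rw [hη]
      field_simp
      ring
    rw [hm, hu, h2, shockMomentum_eq]
    nlinarith
  have hformula : ∀ ρ, cr * ρr ^ 2 * (√(η - 1) / 4) * (η * ρ * ((3 * η - 4) * ρ + η * ρr))
        / (η * ρr * ρ - ρ ^ 2) ^ ((5 : ℝ) / 2)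
      = cr * √(η - 1) * (η * ρr * ρ * ((3 * (η * ρr) - 4 * ρr) * ρ + η * ρr * ρr) / 4)
        / (η * ρr * ρ - ρ ^ 2) ^ ((5 : ℝ) / 2) := fun ρ => by ring
  refine ⟨fun ρ hρ => ⟨?_, ?_⟩, ?_⟩
  · have hgap : 0 < η * ρr * ρ - ρ ^ 2 := by nlinarith [hρ.1, hρ.2]
    rw [hformula]
    exact (hasDerivAt_deriv_shockMomentum _ _ _ _ hgap).congr_of_eventuallyEq
      (hm_eq.eventuallyEq_of_mem (isOpen_Ioo.mem_nhds hρ)).deriv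
  · rw [hformula]
    exact shockMomentum_secondDeriv_pos _ _ _ hK hρr.le hρ.1 hρ.2
  · exact (strictConvexOn_shockMomentum _ _ _ _ hK hρr.le).congr hm_eq.symm
end

section
/- Along the compressive branch, the Lax parameter α₄(ρ) = (u(ρ) + c(ρ)) − (u_r + c_r) is strictly increasing in ρ on (ρ_r, η ρ_r); that is, dα₄/dρ = du/dρ + dc/dρ > 0 for every ρ ∈ (ρ_r, η ρ_r). -/
/-!
Both summands of `α₄` increase separately. Writing `t = √((η ρ_r - ρ) ρ)`, one gets
`u' = A (η ρ_r (ρ + ρ_r) - 2 ρ_r ρ) / (2 t³)` with `A = c_r √(2/(γ-1)) > 0`, positive because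
`η ρ_r > ρ > ρ_r`. For the sound speed, `c² = γ p / ρ` and `(p/ρ)'` has numerator
`p_r (η (ρ² + ρ_r²) - 2 ρ ρ_r) ≥ p_r (ρ - ρ_r)² > 0`, using `η > 1`, which is forced by the
interval `(ρ_r, η ρ_r)` being nonempty.
-/

open Set

theorem hasDerivAt_sub_div_sqrt_mul {a b x : ℝ} (hx : 0 < x) (hxa : x < a) :
    HasDerivAt (fun y => (y - b) / √((a - y) * y))
      ((a * (x + b) - 2 * b * x) / (2 * √((a - x) * x) ^ 3)) x := by
  have hw : 0 < (a - x) * x := mul_pos (sub_pos.2 hxa) hx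
  have ht : 0 < √((a - x) * x) := Real.sqrt_pos.2 hw
  have hw' : HasDerivAt (fun y => (a - y) * y) (a - 2 * x) x :=
    (((hasDerivAt_id' x).const_sub a).mul (hasDerivAt_id' x)).congr_deriv (by ring)
  refine (((hasDerivAt_id' x).sub_const b).div (hw'.sqrt hw.ne') ht.ne').congr_deriv ?_
  have hsq : √((a - x) * x) ^ 2 = (a - x) * x := Real.sq_sqrt hw.le
  generalize √((a - x) * x) = t at ht hsq ⊢
  field_simp
  linear_combination 2 * hsq

theorem hasDerivAt_affine_div_sub_div {η a b x : ℝ} (hx : x ≠ 0) (hxa : a - x ≠ 0) :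
    HasDerivAt (fun y => (η * y - b) / (a - y) / y)
      ((η * x ^ 2 - 2 * b * x + a * b) / ((a - x) * x) ^ 2) x := by
  have hq := (((hasDerivAt_id' x).const_mul η).sub_const b).div
    ((hasDerivAt_id' x).const_sub a) hxa
  refine (hq.div (hasDerivAt_id' x) hx).congr_deriv ?_
  simp only [Pi.div_apply]
  field_simp
  ring

theorem exists_hasDerivAt_pos_velocity {A a b ur x : ℝ} (hA : 0 < A) (hb : 0 < b)
    (hx : x ∈ Ioo b a) :
    ∃ d, HasDerivAt (fun y => ur + A * (y - b) / √((a - y) * y)) d x ∧ 0 < d := by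
  obtain ⟨hbx, hxa⟩ := hx
  have hx0 : 0 < x := hb.trans hbx
  have hd : HasDerivAt (fun y => ur + A * (y - b) / √((a - y) * y))
      (A * ((a * (x + b) - 2 * b * x) / (2 * √((a - x) * x) ^ 3))) x := by
    simpa only [mul_div_assoc] using
      ((hasDerivAt_sub_div_sqrt_mul hx0 hxa).const_mul A).const_add ur
  refine ⟨_, hd, ?_⟩
  have hnum : 0 < a * (x + b) - 2 * b * x := by nlinarith
  have : 0 < √((a - x) * x) := Real.sqrt_pos.2 (mul_pos (sub_pos.2 hxa) hx0)
  positivity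

theorem exists_hasDerivAt_pos_soundSpeed {k q η b x : ℝ} (hk : 0 < k) (hq : 0 < q)
    (hb : 0 < b) (hx : x ∈ Ioo b (η * b)) :
    ∃ d, HasDerivAt (fun y => √(k * (q * (η * y - b) / (η * b - y)) / y)) d x ∧ 0 < d := by
  obtain ⟨hbx, hxa⟩ := hx
  have hx0 : 0 < x := hb.trans hbx
  have hη : 1 < η := by nlinarith
  have hden : 0 < η * b - x := sub_pos.2 hxa
  have hnum : 0 < η * x - b := by nlinarith
  have hfun : (fun y => √(k * (q * (η * y - b) / (η * b - y)) / y)) =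
      fun y => √(k * q * ((η * y - b) / (η * b - y) / y)) := by
    funext y; congr 1; ring
  have hg := (hasDerivAt_affine_div_sub_div (η := η) (b := b) hx0.ne' hden.ne').const_mul (k * q)
  refine ⟨_, hfun ▸ hg.sqrt (by positivity), ?_⟩
  have : 0 < η * x ^ 2 - 2 * b * x + η * b * b := by nlinarith [sq_nonneg (x - b)]
  positivity

theorem strictMonoOn_Ioo_of_hasDerivAt_pos {f : ℝ → ℝ} {a b : ℝ}
    (hf : ∀ x ∈ Ioo a b, ∃ f', HasDerivAt f f' x ∧ 0 < f') : StrictMonoOn f (Ioo a b) := by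
  refine strictMonoOn_of_deriv_pos (convex_Ioo a b) (fun x hx => ?_) (fun x hx => ?_)
  · obtain ⟨f', hf', -⟩ := hf x hx
    exact hf'.continuousAt.continuousWithinAt
  · rw [interior_Ioo] at hx
    obtain ⟨f', hf', hpos⟩ := hf x hx
    rwa [hf'.deriv]

theorem stmt4_general (γ ρr ur pr η cr : ℝ)
    (hγ : 1 < γ) (hρr : 0 < ρr) (hpr : 0 < pr)
    (hcr : cr = Real.sqrt (γ * pr / ρr))
    (p u c α : ℝ → ℝ)
    (hp : ∀ ρ, p ρ = pr * (η * ρ - ρr) / (η * ρr - ρ))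
    (hu : ∀ ρ, u ρ = ur + cr * Real.sqrt (2 / (γ - 1)) * (ρ - ρr)
        / Real.sqrt ((η * ρr - ρ) * ρ))
    (hc : ∀ ρ, c ρ = Real.sqrt (γ * p ρ / ρ))
    (hα : ∀ ρ, α ρ = (u ρ + c ρ) - (ur + cr)) :
    StrictMonoOn α (Set.Ioo ρr (η * ρr))
    ∧ ∀ ρ ∈ Set.Ioo ρr (η * ρr),
        deriv α ρ = deriv u ρ + deriv c ρ ∧ 0 < deriv α ρ := by
  have hγ0 : 0 < γ := by linarith
  have hA : 0 < cr * √(2 / (γ - 1)) :=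
    mul_pos (hcr ▸ Real.sqrt_pos.2 (by positivity)) (Real.sqrt_pos.2 (div_pos two_pos (sub_pos.2 hγ)))
  have hαd : ∀ ρ ∈ Ioo ρr (η * ρr),
      HasDerivAt α (deriv u ρ + deriv c ρ) ρ ∧ 0 < deriv u ρ + deriv c ρ := by
    intro ρ hρ
    obtain ⟨du, hud, hdu⟩ := exists_hasDerivAt_pos_velocity (ur := ur) hA hρr hρ
    obtain ⟨dc, hcd, hdc⟩ := exists_hasDerivAt_pos_soundSpeed hγ0 hpr hρr hρ
    rw [← funext hu] at hud
    rw [← funext fun ρ => (hp ρ ▸ hc ρ :)] at hcd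
    rw [hud.deriv, hcd.deriv, funext hα]
    exact ⟨(hud.add hcd).sub_const _, add_pos hdu hdc⟩
  refine ⟨strictMonoOn_Ioo_of_hasDerivAt_pos fun ρ hρ => ⟨_, hαd ρ hρ⟩, fun ρ hρ => ?_⟩
  rw [(hαd ρ hρ).1.deriv]
  exact ⟨rfl, (hαd ρ hρ).2⟩

/-- The Lax parameter `α₄(ρ) = (u(ρ) + c(ρ)) − (u_r + c_r)` is strictly increasing
on the compressive branch, with `α₄' = u' + c' > 0`. -/
theorem stmt4 (γ ρr ur pr η cr : ℝ)
    (hγ : 1 < γ) (hρr : 0 < ρr) (hpr : 0 < pr)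
    (hη : η = (γ + 1) / (γ - 1))
    (hcr : cr = Real.sqrt (γ * pr / ρr))
    (p u c α : ℝ → ℝ)
    (hp : ∀ ρ, p ρ = pr * (η * ρ - ρr) / (η * ρr - ρ))
    (hu : ∀ ρ, u ρ = ur + cr * Real.sqrt (2 / (γ - 1)) * (ρ - ρr)
        / Real.sqrt ((η * ρr - ρ) * ρ))
    (hc : ∀ ρ, c ρ = Real.sqrt (γ * p ρ / ρ))
    (hα : ∀ ρ, α ρ = (u ρ + c ρ) - (ur + cr)) :
    StrictMonoOn α (Set.Ioo ρr (η * ρr))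
    ∧ ∀ ρ ∈ Set.Ioo ρr (η * ρr),
        deriv α ρ = deriv u ρ + deriv c ρ ∧ 0 < deriv α ρ :=
  stmt4_general γ ρr ur pr η cr hγ hρr hpr hcr p u c α hp hu hc hα
end

section
/- Along the compressive branch, the shock speed s(ρ) = (ρ u(ρ) − ρ_r u_r)/(ρ − ρ_r) is strictly increasing in ρ on (ρ_r, η ρ_r); indeed ds/dρ = (1/(ρ − ρ_r)) · ( d(ρu)/dρ − (ρ u(ρ) − ρ_r u_r)/(ρ − ρ_r) ) > 0 for all ρ ∈ (ρ_r, η ρ_r). -/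
/-!
On the branch, `ρ / √((η ρ_r − ρ) ρ) = √(ρ / (η ρ_r − ρ))`, so the factor `ρ − ρ_r` cancels
and the shock speed has the closed form `s(ρ) = u_r + K √(ρ / (η ρ_r − ρ))` with
`K = c_r √(2/(γ−1)) > 0`. Its derivative `K η ρ_r / ((η ρ_r − ρ)² · 2√(ρ / (η ρ_r − ρ)))` is
positive, and by uniqueness of derivatives it equals the quotient-rule expression for `s'(ρ)`.
-/

open Real Set Filter

theorem hasDerivAt_div_sub_of_differentiableAt {f : ℝ → ℝ} {a b x : ℝ}
    (hf : DifferentiableAt ℝ f x) (hx : x ≠ a) :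
    HasDerivAt (fun y => (f y - b) / (y - a))
      (1 / (x - a) * (deriv f x - (f x - b) / (x - a))) x := by
  have hxa : x - a ≠ 0 := sub_ne_zero.mpr hx
  refine ((hf.hasDerivAt.sub_const b).fun_div ((hasDerivAt_id' x).sub_const a) hxa).congr_deriv ?_
  field_simp

theorem hasDerivAt_sqrt_div_sub {A x : ℝ} (hx : 0 < x) (hxA : x < A) :
    HasDerivAt (fun y => √(y / (A - y))) (A / (A - x) ^ 2 / (2 * √(x / (A - x)))) x := by
  have hAx : A - x ≠ 0 := (sub_pos.mpr hxA).ne'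
  have h := (hasDerivAt_id' x).fun_div ((hasDerivAt_id' x).const_sub A) hAx
  refine (h.sqrt (div_pos hx (sub_pos.mpr hxA)).ne').congr_deriv ?_
  ring

theorem div_sqrt_mul_sub_eq_sqrt_div {A x : ℝ} (hx : 0 < x) (hxA : x < A) :
    x / √((A - x) * x) = √(x / (A - x)) := by
  have hAx : 0 < A - x := sub_pos.mpr hxA
  rw [sqrt_div' _ hAx.le, sqrt_mul hAx.le, eq_div_iff (sqrt_pos.mpr hAx).ne']
  field_simp
  rw [sq_sqrt hx.le]

section Hugoniot

variable {ur ρr K A : ℝ}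

theorem differentiableAt_hugoniot_velocity {ρ : ℝ} (hρ : ρ ∈ Ioo 0 A) :
    DifferentiableAt ℝ (fun x => ur + K * (x - ρr) / √((A - x) * x)) ρ := by
  have hpos : 0 < (A - ρ) * ρ := mul_pos (sub_pos.mpr hρ.2) hρ.1
  have : (A - ρ) * ρ ≠ 0 := hpos.ne'
  have : √((A - ρ) * ρ) ≠ 0 := (sqrt_pos.mpr hpos).ne'
  fun_prop (disch := assumption)

theorem hugoniot_shock_speed_eq (hρr : 0 < ρr) {x : ℝ} (hx : x ∈ Ioo ρr A) :
    (x * (ur + K * (x - ρr) / √((A - x) * x)) - ρr * ur) / (x - ρr)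
      = ur + K * √(x / (A - x)) := by
  rw [← div_sqrt_mul_sub_eq_sqrt_div (hρr.trans hx.1) hx.2]
  have : x - ρr ≠ 0 := (sub_pos.mpr hx.1).ne'
  field_simp
  ring

theorem hasDerivAt_hugoniot_shock_speed (hρr : 0 < ρr) {ρ : ℝ} (hρ : ρ ∈ Ioo ρr A) :
    HasDerivAt (fun x => (x * (ur + K * (x - ρr) / √((A - x) * x)) - ρr * ur) / (x - ρr))
      (K * (A / (A - ρ) ^ 2 / (2 * √(ρ / (A - ρ))))) ρ :=
  (((hasDerivAt_sqrt_div_sub (hρr.trans hρ.1) hρ.2).const_mul K).const_add ur).congr_of_eventuallyEq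
    (eventuallyEq_of_mem (isOpen_Ioo.mem_nhds hρ) fun _ hx => hugoniot_shock_speed_eq hρr hx)

end Hugoniot

theorem stmt5_general (γ ρr ur pr η cr : ℝ)
    (hγ : 1 < γ) (hρr : 0 < ρr) (hpr : 0 < pr)
    (hcr : cr = Real.sqrt (γ * pr / ρr))
    (u s : ℝ → ℝ)
    (hu : ∀ ρ, u ρ = ur + cr * Real.sqrt (2 / (γ - 1)) * (ρ - ρr)
        / Real.sqrt ((η * ρr - ρ) * ρ))
    (hs : ∀ ρ, s ρ = (ρ * u ρ - ρr * ur) / (ρ - ρr)) :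
    StrictMonoOn s (Set.Ioo ρr (η * ρr))
    ∧ ∀ ρ ∈ Set.Ioo ρr (η * ρr),
        HasDerivAt s
          ((1 / (ρ - ρr))
            * (deriv (fun x => x * u x) ρ - (ρ * u ρ - ρr * ur) / (ρ - ρr))) ρ
        ∧ 0 < (1 / (ρ - ρr))
            * (deriv (fun x => x * u x) ρ - (ρ * u ρ - ρr * ur) / (ρ - ρr)) := by
  set A := η * ρr
  set K := cr * √(2 / (γ - 1))
  have hK : 0 < K := by
    have : 0 < γ * pr / ρr := by positivity
    have : 0 < 2 / (γ - 1) := div_pos two_pos (by linarith)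
    simp only [K, hcr]
    positivity
  have hu' : u = fun x => ur + K * (x - ρr) / √((A - x) * x) := funext hu
  have hs' : s = fun x => (x * u x - ρr * ur) / (x - ρr) := funext hs
  have hderiv : ∀ ρ ∈ Ioo ρr A, HasDerivAt s
      (1 / (ρ - ρr) * (deriv (fun x => x * u x) ρ - (ρ * u ρ - ρr * ur) / (ρ - ρr))) ρ ∧
      0 < 1 / (ρ - ρr) * (deriv (fun x => x * u x) ρ - (ρ * u ρ - ρr * ur) / (ρ - ρr)) := by
    intro ρ hρ
    have hρ0 : 0 < ρ := hρr.trans hρ.1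
    have hu_diff : DifferentiableAt ℝ u ρ :=
      hu' ▸ differentiableAt_hugoniot_velocity ⟨hρ0, hρ.2⟩
    have hquot := hasDerivAt_div_sub_of_differentiableAt (f := fun x => x * u x) (b := ρr * ur)
      (differentiableAt_fun_id.mul hu_diff) hρ.1.ne'
    rw [← hs'] at hquot
    have hclosed : HasDerivAt s (K * (A / (A - ρ) ^ 2 / (2 * √(ρ / (A - ρ))))) ρ := by
      rw [hs', hu']
      exact hasDerivAt_hugoniot_shock_speed hρr hρ
    refine ⟨hquot, hquot.unique hclosed ▸ ?_⟩
    have hAρ : 0 < A - ρ := sub_pos.mpr hρ.2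
    exact mul_pos hK (div_pos (div_pos (hρ0.trans hρ.2) (pow_pos hAρ 2))
      (mul_pos two_pos (sqrt_pos.mpr (div_pos hρ0 hAρ))))
  refine ⟨strictMonoOn_of_deriv_pos (convex_Ioo _ _) ?_ ?_, hderiv⟩
  · exact fun x hx => (hderiv x hx).1.continuousAt.continuousWithinAt
  · intro x hx
    rw [interior_Ioo] at hx
    rw [(hderiv x hx).1.deriv]
    exact (hderiv x hx).2

/-- The shock speed `s(ρ)` is strictly increasing on the compressive branch, with
`s'(ρ) = (1/(ρ−ρ_r)) (d(ρu)/dρ − (ρu − ρ_r u_r)/(ρ−ρ_r)) > 0`. -/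
theorem stmt5 (γ ρr ur pr η cr : ℝ)
    (hγ : 1 < γ) (hρr : 0 < ρr) (hpr : 0 < pr)
    (hη : η = (γ + 1) / (γ - 1))
    (hcr : cr = Real.sqrt (γ * pr / ρr))
    (u s : ℝ → ℝ)
    (hu : ∀ ρ, u ρ = ur + cr * Real.sqrt (2 / (γ - 1)) * (ρ - ρr)
        / Real.sqrt ((η * ρr - ρ) * ρ))
    (hs : ∀ ρ, s ρ = (ρ * u ρ - ρr * ur) / (ρ - ρr)) :
    StrictMonoOn s (Set.Ioo ρr (η * ρr))
    ∧ ∀ ρ ∈ Set.Ioo ρr (η * ρr),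
        HasDerivAt s
          ((1 / (ρ - ρr))
            * (deriv (fun x => x * u x) ρ - (ρ * u ρ - ρr * ur) / (ρ - ρr))) ρ
        ∧ 0 < (1 / (ρ - ρr))
            * (deriv (fun x => x * u x) ρ - (ρ * u ρ - ρr * ur) / (ρ - ρr)) :=
  stmt5_general γ ρr ur pr η cr hγ hρr hpr hcr u s hu hs
end

section
/- (Lemma 2.1 of the paper.) Along the compressive branch of the 4-shock curve, the density, velocity, pressure and shock speed are all strictly increasing with respect to the Lax parameter α₄(ρ) = (u(ρ) + c(ρ)) − (u_r + c_r). Precisely: for all ρ₁, ρ₂ with ρ_r < ρ₁ < ρ₂ < η ρ_r one has α₄(ρ₁) < α₄(ρ₂), u(ρ₁) < u(ρ₂), p(ρ₁) < p(ρ₂) and s(ρ₁) < s(ρ₂); hence, as functions of α₄ on the image of (ρ_r, η ρ_r), the quantities ρ, u, p and s are strictly increasing. -/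
/-!
With `t = ρ / (η ρr - ρ)`, which increases on `(ρr, η ρr)`, and `K = cr √(2 / (γ - 1))`,
the branch reads `s - ur = K √t`, `u - ur = K (1 - ρr / ρ) √t`, `p = pr (η - ρr / ρ) t` and
`c² = γ pr (η - ρr / ρ) / (η ρr - ρ)`. Each is a positive multiple of a product of nonnegative
increasing factors, hence increasing in `ρ`, and so is `α = u + c - (ur + cr)`.
-/

open Set Real

theorem StrictMonoOn.mul_of_nonneg {α M₀ : Type*} [Preorder α] [MulZeroClass M₀] [Preorder M₀]
    [PosMulStrictMono M₀] [MulPosMono M₀] {f g : α → M₀} {s : Set α}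
    (hf : StrictMonoOn f s) (hg : StrictMonoOn g s)
    (hf₀ : ∀ x ∈ s, 0 ≤ f x) (hg₀ : ∀ x ∈ s, 0 ≤ g x) :
    StrictMonoOn (fun x => f x * g x) s :=
  fun _ hx _ hy hxy => mul_lt_mul'' (hf hx hy hxy) (hg hx hy hxy) (hf₀ _ hx) (hg₀ _ hx)

theorem strictMonoOn_inv_sub (d : ℝ) : StrictMonoOn (fun x => (d - x)⁻¹) (Iio d) :=
  fun _ _ _ hy hxy =>
    (inv_lt_inv₀ (sub_pos.2 (hxy.trans hy)) (sub_pos.2 hy)).2 (sub_lt_sub_left hxy d)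

theorem strictMonoOn_div_sub (d : ℝ) : StrictMonoOn (fun x => x / (d - x)) (Ioo 0 d) :=
  (strictMonoOn_id.mul_of_nonneg ((strictMonoOn_inv_sub d).mono Ioo_subset_Iio_self)
    (fun _ hx => hx.1.le) fun _ hx => inv_nonneg.2 (sub_nonneg.2 hx.2.le)).congr
    fun x _ => (div_eq_mul_inv x (d - x)).symm

theorem strictMonoOn_sqrt_div_sub (d : ℝ) : StrictMonoOn (fun x => √(x / (d - x))) (Ioo 0 d) :=
  strictMonoOn_sqrt.comp (strictMonoOn_div_sub d) fun _ hx =>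
    div_nonneg hx.1.le (sub_nonneg.2 hx.2.le)

theorem strictMonoOn_sub_div (k : ℝ) {a : ℝ} (ha : 0 < a) :
    StrictMonoOn (fun x => k - a / x) (Ioi 0) :=
  fun _ hx _ _ hxy => sub_lt_sub_left (div_lt_div_of_pos_left ha hx hxy) k

theorem sub_div_nonneg_of_le {k a x : ℝ} (hk : 1 ≤ k) (hx : 0 < x) (hax : a ≤ x) :
    0 ≤ k - a / x :=
  sub_nonneg.2 (((div_le_one hx).2 hax).trans hk)

theorem div_sqrt_mul_self (a : ℝ) {x : ℝ} (hx : 0 ≤ x) : x / √(a * x) = √(x / a) := by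
  rcases hx.eq_or_lt with rfl | hx
  · simp
  rw [← sqrt_sq hx.le, ← sqrt_div (sq_nonneg x), sqrt_sq hx.le, sq, mul_div_mul_right _ _ hx.ne']

section HugoniotLocus

variable {η ρr : ℝ}

theorem velocity_strictMonoOn (hρr : 0 < ρr) (ur : ℝ) {K : ℝ} (hK : 0 < K) :
    StrictMonoOn (fun ρ => ur + K * (ρ - ρr) / √((η * ρr - ρ) * ρ)) (Ioo ρr (η * ρr)) := by
  have hfactor : StrictMonoOn (fun ρ => (1 - ρr / ρ) * √(ρ / (η * ρr - ρ))) (Ioo ρr (η * ρr)) :=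
    ((strictMonoOn_sub_div 1 hρr).mono fun _ hρ => hρr.trans hρ.1).mul_of_nonneg
      ((strictMonoOn_sqrt_div_sub _).mono (Ioo_subset_Ioo_left hρr.le))
      (fun _ hρ => sub_div_nonneg_of_le le_rfl (hρr.trans hρ.1) hρ.1.le) fun _ _ => sqrt_nonneg _
  refine (((strictMono_mul_left_of_pos hK).comp_strictMonoOn hfactor).const_add ur).congr ?_
  intro ρ hρ
  have hρ0 : 0 < ρ := hρr.trans hρ.1
  have hq : 0 < √((η * ρr - ρ) * ρ) := sqrt_pos.2 (mul_pos (sub_pos.2 hρ.2) hρ0)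
  simp only [Function.comp_apply, ← div_sqrt_mul_self _ hρ0.le]
  field_simp

theorem shockSpeed_strictMonoOn (hρr : 0 < ρr) (ur : ℝ) {K : ℝ} (hK : 0 < K) :
    StrictMonoOn (fun ρ => (ρ * (ur + K * (ρ - ρr) / √((η * ρr - ρ) * ρ)) - ρr * ur) / (ρ - ρr))
      (Ioo ρr (η * ρr)) := by
  refine (((strictMono_mul_left_of_pos hK).comp_strictMonoOn
    ((strictMonoOn_sqrt_div_sub _).mono (Ioo_subset_Ioo_left hρr.le))).const_add ur).congr ?_
  intro ρ hρ
  have hρ0 : 0 < ρ := hρr.trans hρ.1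
  have hq : 0 < √((η * ρr - ρ) * ρ) := sqrt_pos.2 (mul_pos (sub_pos.2 hρ.2) hρ0)
  have hρρr : ρ - ρr ≠ 0 := (sub_pos.2 hρ.1).ne'
  simp only [Function.comp_apply, ← div_sqrt_mul_self _ hρ0.le]
  field_simp
  ring

theorem pressure_strictMonoOn (hη : 1 ≤ η) (hρr : 0 < ρr) {pr : ℝ} (hpr : 0 < pr) :
    StrictMonoOn (fun ρ => pr * (η * ρ - ρr) / (η * ρr - ρ)) (Ioo ρr (η * ρr)) := by
  have hfactor : StrictMonoOn (fun ρ => (η - ρr / ρ) * (ρ / (η * ρr - ρ))) (Ioo ρr (η * ρr)) :=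
    ((strictMonoOn_sub_div η hρr).mono fun _ hρ => hρr.trans hρ.1).mul_of_nonneg
      ((strictMonoOn_div_sub _).mono (Ioo_subset_Ioo_left hρr.le))
      (fun _ hρ => sub_div_nonneg_of_le hη (hρr.trans hρ.1) hρ.1.le)
      fun _ hρ => div_nonneg (hρr.trans hρ.1).le (sub_nonneg.2 hρ.2.le)
  refine ((strictMono_mul_left_of_pos hpr).comp_strictMonoOn hfactor).congr ?_
  intro ρ hρ
  have hρ0 : ρ ≠ 0 := (hρr.trans hρ.1).ne'
  have hd : η * ρr - ρ ≠ 0 := (sub_pos.2 hρ.2).ne'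
  simp only [Function.comp_apply]
  field_simp

theorem soundSpeed_strictMonoOn (hη : 1 ≤ η) (hρr : 0 < ρr) {γ pr : ℝ} (hγ : 0 < γ)
    (hpr : 0 < pr) :
    StrictMonoOn (fun ρ => √(γ * (pr * (η * ρ - ρr) / (η * ρr - ρ)) / ρ)) (Ioo ρr (η * ρr)) := by
  have hfactor : StrictMonoOn (fun ρ => (η - ρr / ρ) * (η * ρr - ρ)⁻¹) (Ioo ρr (η * ρr)) :=
    ((strictMonoOn_sub_div η hρr).mono fun _ hρ => hρr.trans hρ.1).mul_of_nonneg
      ((strictMonoOn_inv_sub _).mono Ioo_subset_Iio_self)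
      (fun _ hρ => sub_div_nonneg_of_le hη (hρr.trans hρ.1) hρ.1.le)
      fun _ hρ => inv_nonneg.2 (sub_nonneg.2 hρ.2.le)
  have hsq := (strictMono_mul_left_of_pos (mul_pos hγ hpr)).comp_strictMonoOn hfactor
  refine (strictMonoOn_sqrt.comp hsq fun ρ hρ => ?_).congr fun ρ hρ => ?_
  · exact mul_nonneg (mul_pos hγ hpr).le (mul_nonneg
      (sub_div_nonneg_of_le hη (hρr.trans hρ.1) hρ.1.le) (inv_nonneg.2 (sub_nonneg.2 hρ.2.le)))
  · have hρ0 : ρ ≠ 0 := (hρr.trans hρ.1).ne'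
    have hd : η * ρr - ρ ≠ 0 := (sub_pos.2 hρ.2).ne'
    simp only [Function.comp_apply]
    congr 1
    field_simp

end HugoniotLocus

/-- Lemma 2.1 of the paper: along the compressive branch of the 4-shock curve, the
density, velocity, pressure and shock speed are all strictly increasing with respect
to the Lax parameter `α₄`. -/
theorem stmt6 (γ ρr ur pr η cr : ℝ)
    (hγ : 1 < γ) (hρr : 0 < ρr) (hpr : 0 < pr)
    (hη : η = (γ + 1) / (γ - 1))
    (hcr : cr = Real.sqrt (γ * pr / ρr))
    (p u c s α : ℝ → ℝ)
    (hp : ∀ ρ, p ρ = pr * (η * ρ - ρr) / (η * ρr - ρ))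
    (hu : ∀ ρ, u ρ = ur + cr * Real.sqrt (2 / (γ - 1)) * (ρ - ρr)
        / Real.sqrt ((η * ρr - ρ) * ρ))
    (hc : ∀ ρ, c ρ = Real.sqrt (γ * p ρ / ρ))
    (hs : ∀ ρ, s ρ = (ρ * u ρ - ρr * ur) / (ρ - ρr))
    (hα : ∀ ρ, α ρ = (u ρ + c ρ) - (ur + cr)) :
    ∀ ρ₁ ρ₂ : ℝ, ρr < ρ₁ → ρ₁ < ρ₂ → ρ₂ < η * ρr →
      α ρ₁ < α ρ₂ ∧ u ρ₁ < u ρ₂ ∧ p ρ₁ < p ρ₂ ∧ s ρ₁ < s ρ₂ := by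
  intro ρ₁ ρ₂ h₁ h₁₂ h₂
  have hγ1 : 0 < γ - 1 := sub_pos.2 hγ
  have hη1 : 1 ≤ η := by rw [hη, le_div_iff₀ hγ1]; linarith
  have hK : 0 < cr * √(2 / (γ - 1)) := by
    rw [hcr]; exact mul_pos (sqrt_pos.2 (by positivity)) (sqrt_pos.2 (by positivity))
  have hp' : StrictMonoOn p (Ioo ρr (η * ρr)) :=
    (pressure_strictMonoOn hη1 hρr hpr).congr fun ρ _ => (hp ρ).symm
  have hu' : StrictMonoOn u (Ioo ρr (η * ρr)) :=
    (velocity_strictMonoOn hρr ur hK).congr fun ρ _ => (hu ρ).symm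
  have hc' : StrictMonoOn c (Ioo ρr (η * ρr)) :=
    (soundSpeed_strictMonoOn hη1 hρr (zero_lt_one.trans hγ) hpr).congr fun ρ _ => by rw [hc, hp]
  have hs' : StrictMonoOn s (Ioo ρr (η * ρr)) :=
    (shockSpeed_strictMonoOn hρr ur hK).congr fun ρ _ => by rw [hs, hu]
  have hmem₁ : ρ₁ ∈ Ioo ρr (η * ρr) := ⟨h₁, h₁₂.trans h₂⟩
  have hmem₂ : ρ₂ ∈ Ioo ρr (η * ρr) := ⟨h₁.trans h₁₂, h₂⟩
  refine ⟨?_, hu' hmem₁ hmem₂ h₁₂, hp' hmem₁ hmem₂ h₁₂, hs' hmem₁ hmem₂ h₁₂⟩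
  rw [hα, hα]
  linarith [hu' hmem₁ hmem₂ h₁₂, hc' hmem₁ hmem₂ h₁₂]
end

section
/- Along the compressive branch, for every ρ ∈ (ρ_r, η ρ_r) the following two strict inequalities hold (primes denoting d/dρ): γ p(ρ) u'(ρ) − (s(ρ) − u(ρ)) p'(ρ) > 0 and c(ρ)² p'(ρ) − γ (s(ρ) − u(ρ)) p(ρ) u'(ρ) > 0. -/
/-!
Write `A = η ρr - ρ`, `S = √(A ρ)` and `K = cr √(2/(γ-1))`. Along the branch
`p' = pr ρr (η² - 1)/A²`, `u' = K ρr (η ρ + η ρr - 2ρ)/(2 A ρ S)` and `s - u = ρr K/S`, so both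
quantities are a positive factor times a polynomial in `ρ`. Using `γ (η - 1) = η + 1`, these
polynomials become `(η + 1)/(η - 1)` times `η (ρ - ρr) (A + (η - 1)(ρ - ρr))` and `η (ρ - ρr)`
respectively, both positive for `ρr < ρ < η ρr`.
-/

theorem hasDerivAt_hugoniot_pressure (pr η ρr ρ : ℝ) (hρ : η * ρr - ρ ≠ 0) :
    HasDerivAt (fun x => pr * (η * x - ρr) / (η * ρr - x))
      (pr * ρr * (η ^ 2 - 1) / (η * ρr - ρ) ^ 2) ρ := by
  have hnum : HasDerivAt (fun x => pr * (η * x - ρr)) (pr * η) ρ := by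
    simpa using (((hasDerivAt_id ρ).const_mul η).sub_const ρr).const_mul pr
  have hden : HasDerivAt (fun x => η * ρr - x) (-1) ρ := by
    simpa using (hasDerivAt_id ρ).const_sub (η * ρr)
  exact (hnum.div hden hρ).congr_deriv (by ring)

theorem hasDerivAt_hugoniot_velocity (ur K η ρr ρ : ℝ) (hρ : 0 < (η * ρr - ρ) * ρ) :
    HasDerivAt (fun x => ur + K * (x - ρr) / √((η * ρr - x) * x))
      (K * ρr * (η * ρ + η * ρr - 2 * ρ) / (2 * ((η * ρr - ρ) * ρ) * √((η * ρr - ρ) * ρ))) ρ := by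
  have hg : HasDerivAt (fun x => (η * ρr - x) * x) (η * ρr - 2 * ρ) ρ :=
    (((hasDerivAt_id ρ).const_sub (η * ρr)).mul (hasDerivAt_id ρ)).congr_deriv (by simp; ring)
  have hnum : HasDerivAt (fun x => K * (x - ρr)) K ρ := by
    simpa using ((hasDerivAt_id ρ).sub_const ρr).const_mul K
  have hS := Real.sqrt_pos.2 hρ
  refine ((hnum.div (hg.sqrt hρ.ne') hS.ne').const_add ur).congr_deriv ?_
  have hS2 := Real.sq_sqrt hρ.le
  generalize √((η * ρr - ρ) * ρ) = S at hS hS2 ⊢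
  rw [← hS2]
  field_simp
  rw [hS2]
  ring

theorem shock_speed_sub_velocity (ρ ρr v vr : ℝ) (hρ : ρ - ρr ≠ 0) :
    (ρ * v - ρr * vr) / (ρ - ρr) - v = ρr * (v - vr) / (ρ - ρr) := by
  field_simp
  ring

section Polynomials

variable {γ η ρr ρ : ℝ}

theorem hugoniot_first_polynomial_pos (hγη : γ * (η - 1) = η + 1) (hη : 1 < η)
    (h1 : ρr < ρ) (h2 : ρ < η * ρr) :
    0 < γ * (η * ρ - ρr) * (η * ρ + η * ρr - 2 * ρ) - 2 * ρ * ρr * (η ^ 2 - 1) := by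
  have key : (η - 1) * (γ * (η * ρ - ρr) * (η * ρ + η * ρr - 2 * ρ) - 2 * ρ * ρr * (η ^ 2 - 1))
      = (η + 1) * η * (ρ - ρr) * ((η * ρr - ρ) + (η - 1) * (ρ - ρr)) := by
    linear_combination ((η * ρ - ρr) * (η * ρ + η * ρr - 2 * ρ)) * hγη
  have hη1 : 0 < η - 1 := by linarith
  have : 0 < (η - 1) * (γ * (η * ρ - ρr) * (η * ρ + η * ρr - 2 * ρ) - 2 * ρ * ρr * (η ^ 2 - 1)) := by
    have : 0 < ρ - ρr := by linarith
    have : 0 < η * ρr - ρ := by linarith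
    rw [key]
    positivity
  exact pos_of_mul_pos_right this hη1.le

theorem hugoniot_second_polynomial_pos (hγη : γ * (η - 1) = η + 1) (hη : 1 < η)
    (h1 : ρr < ρ) :
    0 < (γ - 1) * ρ * (η ^ 2 - 1) - γ * (η * ρ + η * ρr - 2 * ρ) := by
  have key : (η - 1) * ((γ - 1) * ρ * (η ^ 2 - 1) - γ * (η * ρ + η * ρr - 2 * ρ))
      = (η + 1) * η * (ρ - ρr) := by
    linear_combination (ρ * (η ^ 2 - 1) - (η * ρ + η * ρr - 2 * ρ)) * hγη
  have hη1 : 0 < η - 1 := by linarith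
  have : 0 < (η - 1) * ((γ - 1) * ρ * (η ^ 2 - 1) - γ * (η * ρ + η * ρr - 2 * ρ)) := by
    have : 0 < ρ - ρr := by linarith
    rw [key]
    positivity
  exact pos_of_mul_pos_right this hη1.le

end Polynomials

section ClosedForms

variable {γ η ρr ρ pr K : ℝ}

theorem hugoniot_first_inequality (hγη : γ * (η - 1) = η + 1) (hη : 1 < η)
    (hρr : 0 < ρr) (h1 : ρr < ρ) (h2 : ρ < η * ρr) (hpr : 0 < pr) (hK : 0 < K) :
    0 < γ * (pr * (η * ρ - ρr) / (η * ρr - ρ))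
        * (K * ρr * (η * ρ + η * ρr - 2 * ρ) / (2 * ((η * ρr - ρ) * ρ) * √((η * ρr - ρ) * ρ)))
      - ρr * K / √((η * ρr - ρ) * ρ) * (pr * ρr * (η ^ 2 - 1) / (η * ρr - ρ) ^ 2) := by
  have hA : 0 < η * ρr - ρ := by linarith
  have hρ : 0 < ρ := by linarith
  have hS := Real.sqrt_pos.2 (mul_pos hA hρ)
  generalize √((η * ρr - ρ) * ρ) = S at hS ⊢
  have key : γ * (pr * (η * ρ - ρr) / (η * ρr - ρ))
        * (K * ρr * (η * ρ + η * ρr - 2 * ρ) / (2 * ((η * ρr - ρ) * ρ) * S))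
      - ρr * K / S * (pr * ρr * (η ^ 2 - 1) / (η * ρr - ρ) ^ 2)
      = K * ρr * pr / (2 * S * (η * ρr - ρ) ^ 2 * ρ)
        * (γ * (η * ρ - ρr) * (η * ρ + η * ρr - 2 * ρ) - 2 * ρ * ρr * (η ^ 2 - 1)) := by
    field_simp
  rw [key]
  exact mul_pos (by positivity) (hugoniot_first_polynomial_pos hγη hη h1 h2)

theorem hugoniot_second_inequality (hγ : 1 < γ) (hγη : γ * (η - 1) = η + 1) (hη : 1 < η)
    (hρr : 0 < ρr) (h1 : ρr < ρ) (h2 : ρ < η * ρr) (hpr : 0 < pr)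
    (hK : K ^ 2 * ρr * (γ - 1) = 2 * γ * pr) :
    0 < γ * (pr * (η * ρ - ρr) / (η * ρr - ρ)) / ρ * (pr * ρr * (η ^ 2 - 1) / (η * ρr - ρ) ^ 2)
      - γ * (ρr * K / √((η * ρr - ρ) * ρ)) * (pr * (η * ρ - ρr) / (η * ρr - ρ))
        * (K * ρr * (η * ρ + η * ρr - 2 * ρ) / (2 * ((η * ρr - ρ) * ρ) * √((η * ρr - ρ) * ρ))) := by
  have hA : 0 < η * ρr - ρ := by linarith
  have hB : 0 < η * ρ - ρr := by nlinarith
  have hρ : 0 < ρ := by linarith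
  have hγ1 : 0 < γ - 1 := by linarith
  have hS := Real.sqrt_pos.2 (mul_pos hA hρ)
  have hS2 := Real.sq_sqrt (mul_pos hA hρ).le
  generalize √((η * ρr - ρ) * ρ) = S at hS hS2 ⊢
  have key : γ * (pr * (η * ρ - ρr) / (η * ρr - ρ)) / ρ * (pr * ρr * (η ^ 2 - 1) / (η * ρr - ρ) ^ 2)
      - γ * (ρr * K / S) * (pr * (η * ρ - ρr) / (η * ρr - ρ))
        * (K * ρr * (η * ρ + η * ρr - 2 * ρ) / (2 * ((η * ρr - ρ) * ρ) * S))
      = γ * pr ^ 2 * ρr * (η * ρ - ρr) / ((γ - 1) * (η * ρr - ρ) ^ 3 * ρ ^ 2)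
        * ((γ - 1) * ρ * (η ^ 2 - 1) - γ * (η * ρ + η * ρr - 2 * ρ)) := by
    rw [← hS2]
    field_simp
    rw [show S ^ 4 = ((η * ρr - ρ) * ρ) ^ 2 by rw [← hS2]; ring]
    linear_combination -ρ ^ 2 * (η * ρr - ρ) ^ 2 * (η * ρ + η * ρr - 2 * ρ) * hK
  rw [key]
  have : 0 < γ := by linarith
  exact mul_pos (by positivity) (hugoniot_second_polynomial_pos hγη hη h1)

end ClosedForms

/-- Along the compressive branch: `γ p u' − (s − u) p' > 0` and
`c² p' − γ (s − u) p u' > 0`. -/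
theorem stmt11 (γ ρr ur pr η cr : ℝ)
    (hγ : 1 < γ) (hρr : 0 < ρr) (hpr : 0 < pr)
    (hη : η = (γ + 1) / (γ - 1))
    (hcr : cr = Real.sqrt (γ * pr / ρr))
    (p u c s : ℝ → ℝ)
    (hp : ∀ ρ, p ρ = pr * (η * ρ - ρr) / (η * ρr - ρ))
    (hu : ∀ ρ, u ρ = ur + cr * Real.sqrt (2 / (γ - 1)) * (ρ - ρr)
        / Real.sqrt ((η * ρr - ρ) * ρ))
    (hc : ∀ ρ, c ρ = Real.sqrt (γ * p ρ / ρ))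
    (hs : ∀ ρ, s ρ = (ρ * u ρ - ρr * ur) / (ρ - ρr)) :
    ∀ ρ ∈ Set.Ioo ρr (η * ρr),
      0 < γ * p ρ * deriv u ρ - (s ρ - u ρ) * deriv p ρ
      ∧ 0 < (c ρ) ^ 2 * deriv p ρ - γ * (s ρ - u ρ) * p ρ * deriv u ρ := by
  rintro ρ ⟨h1, h2⟩
  have hγ1 : 0 < γ - 1 := by linarith
  have hγη : γ * (η - 1) = η + 1 := by rw [hη]; field_simp; ring
  have hη1 : 1 < η := by rw [hη, lt_div_iff₀ hγ1]; linarith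
  have hA : 0 < η * ρr - ρ := by linarith
  have hAρ : 0 < (η * ρr - ρ) * ρ := mul_pos hA (by linarith)
  set K := cr * √(2 / (γ - 1)) with hKdef
  have hK : 0 < K := mul_pos (hcr ▸ Real.sqrt_pos.2 (by positivity)) (Real.sqrt_pos.2 (by positivity))
  have hK2 : K ^ 2 * ρr * (γ - 1) = 2 * γ * pr := by
    rw [hKdef, mul_pow, hcr, Real.sq_sqrt (by positivity), Real.sq_sqrt (by positivity)]
    field_simp [hρr.ne', hγ1.ne']
  have hp' : deriv p ρ = _ := funext hp ▸ (hasDerivAt_hugoniot_pressure pr η ρr ρ hA.ne').deriv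
  have hu' : deriv u ρ = _ := funext hu ▸ (hasDerivAt_hugoniot_velocity ur K η ρr ρ hAρ).deriv
  have hsu : s ρ - u ρ = ρr * K / √((η * ρr - ρ) * ρ) := by
    have hρρr : ρ - ρr ≠ 0 := by linarith
    rw [hs, shock_speed_sub_velocity ρ ρr _ _ hρρr, hu]
    field_simp
    ring
  have hc2 : c ρ ^ 2 = γ * p ρ / ρ := by
    have hpρ : 0 < p ρ := hp ρ ▸ div_pos (mul_pos hpr (by nlinarith)) hA
    have hρ : 0 < ρ := by linarith
    rw [hc, Real.sq_sqrt (by positivity)]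
  rw [hc2, hp', hu', hsu, hp ρ]
  exact ⟨hugoniot_first_inequality hγη hη1 hρr h1 h2 hpr hK,
    hugoniot_second_inequality hγ hγη hη1 hρr h1 h2 hpr hK2⟩
end

section
/- (Reflection coefficient bound, key fact in Proposition 2.3 and Remark 2.2 of the paper.) Define κ(ρ) = (γ p(ρ) u'(ρ) − c(ρ) p'(ρ)) / (γ p(ρ) u'(ρ) + c(ρ) p'(ρ)) along the compressive branch, with primes denoting d/dρ. Then |κ(ρ)| < 1 for every ρ ∈ (ρ_r, η ρ_r). -/
/-- Reflection coefficient bound: `|κ(ρ)| < 1` along the compressive branch. -/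
theorem stmt13 (γ ρr ur pr η cr : ℝ)
    (hγ : 1 < γ) (hρr : 0 < ρr) (hpr : 0 < pr)
    (hη : η = (γ + 1) / (γ - 1))
    (hcr : cr = Real.sqrt (γ * pr / ρr))
    (p u c κ : ℝ → ℝ)
    (hp : ∀ ρ, p ρ = pr * (η * ρ - ρr) / (η * ρr - ρ))
    (hu : ∀ ρ, u ρ = ur + cr * Real.sqrt (2 / (γ - 1)) * (ρ - ρr)
        / Real.sqrt ((η * ρr - ρ) * ρ))
    (hc : ∀ ρ, c ρ = Real.sqrt (γ * p ρ / ρ))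
    (hκ : ∀ ρ, κ ρ = (γ * p ρ * deriv u ρ - c ρ * deriv p ρ)
        / (γ * p ρ * deriv u ρ + c ρ * deriv p ρ)) :
    ∀ ρ ∈ Set.Ioo ρr (η * ρr), |κ ρ| < 1 := by
  intro ρ₀ hρ₀
  obtain ⟨h1, h2⟩ := hρ₀
  have hγ1 : (0:ℝ) < γ - 1 := by linarith
  have hη1 : 1 < η := by
    rw [hη, lt_div_iff₀ hγ1]; linarith
  have hρ0 : 0 < ρ₀ := lt_trans hρr h1
  have ha : 0 < η * ρr - ρ₀ := by linarith
  have hpf : p = fun ρ => pr * (η * ρ - ρr) / (η * ρr - ρ) := funext hp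
  have huf : u = fun ρ => ur + cr * Real.sqrt (2 / (γ - 1)) * (ρ - ρr)
      / Real.sqrt ((η * ρr - ρ) * ρ) := funext hu
  -- derivative of p
  have hden : HasDerivAt (fun ρ : ℝ => η * ρr - ρ) (-1) ρ₀ := by
    simpa using (hasDerivAt_id ρ₀).const_sub (η * ρr)
  have hnum : HasDerivAt (fun ρ : ℝ => pr * (η * ρ - ρr)) (pr * η) ρ₀ := by
    have := (((hasDerivAt_id ρ₀).const_mul η).sub_const ρr).const_mul pr
    simpa [mul_comm, mul_assoc] using this
  have hp' : HasDerivAt p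
      ((pr * η * (η * ρr - ρ₀) - pr * (η * ρ₀ - ρr) * (-1)) / (η * ρr - ρ₀) ^ 2) ρ₀ := by
    rw [hpf]
    exact hnum.div hden (ne_of_gt ha)
  have hderivp : deriv p ρ₀ =
      (pr * η * (η * ρr - ρ₀) - pr * (η * ρ₀ - ρr) * (-1)) / (η * ρr - ρ₀) ^ 2 :=
    hp'.deriv
  have hpderivpos : 0 < deriv p ρ₀ := by
    rw [hderivp]
    apply div_pos _ (by positivity)
    have h3 : ρ₀ < η * ρ₀ := by nlinarith
    nlinarith [mul_pos hpr ha]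
  -- derivative of u
  set K := cr * Real.sqrt (2 / (γ - 1)) with hK
  have hcrpos : 0 < cr := by
    rw [hcr]; exact Real.sqrt_pos.mpr (by positivity)
  have hKpos : 0 < K := by
    apply mul_pos hcrpos
    exact Real.sqrt_pos.mpr (by positivity)
  set hval := (η * ρr - ρ₀) * ρ₀ with hhval
  have hhpos : 0 < hval := mul_pos ha hρ0
  set s := Real.sqrt hval with hs
  have hspos : 0 < s := Real.sqrt_pos.mpr hhpos
  have hs2 : s ^ 2 = hval := Real.sq_sqrt hhpos.le
  have hh : HasDerivAt (fun ρ : ℝ => (η * ρr - ρ) * ρ) ((-1) * ρ₀ + (η * ρr - ρ₀) * 1) ρ₀ :=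
    hden.mul (hasDerivAt_id ρ₀)
  have hsq : HasDerivAt (fun ρ : ℝ => Real.sqrt ((η * ρr - ρ) * ρ))
      (((-1) * ρ₀ + (η * ρr - ρ₀) * 1) / (2 * s)) ρ₀ := by
    exact hh.sqrt (ne_of_gt hhpos)
  have hN : HasDerivAt (fun ρ : ℝ => K * (ρ - ρr)) K ρ₀ := by
    simpa using ((hasDerivAt_id ρ₀).sub_const ρr).const_mul K
  have hu' : HasDerivAt u
      ((K * s - K * (ρ₀ - ρr) * (((-1) * ρ₀ + (η * ρr - ρ₀) * 1) / (2 * s))) / s ^ 2) ρ₀ := by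
    rw [huf]
    have := (hN.div hsq (ne_of_gt hspos)).const_add ur
    simpa [mul_assoc] using this
  have hderivu : deriv u ρ₀ =
      (K * s - K * (ρ₀ - ρr) * (((-1) * ρ₀ + (η * ρr - ρ₀) * 1) / (2 * s))) / s ^ 2 :=
    hu'.deriv
  have hunum : K * s - K * (ρ₀ - ρr) * (((-1) * ρ₀ + (η * ρr - ρ₀) * 1) / (2 * s))
      = K * (2 * hval - (ρ₀ - ρr) * (η * ρr - 2 * ρ₀)) / (2 * s) := by
    rw [← hs2]
    field_simp
    ring
  have hkey : 0 < 2 * hval - (ρ₀ - ρr) * (η * ρr - 2 * ρ₀) := by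
    have : 2 * hval - (ρ₀ - ρr) * (η * ρr - 2 * ρ₀) = ρr * (η * (ρ₀ + ρr) - 2 * ρ₀) := by
      rw [hhval]; ring
    rw [this]
    have h3 : ρ₀ < η * ρ₀ := by nlinarith
    nlinarith
  have huderivpos : 0 < deriv u ρ₀ := by
    rw [hderivu, hunum]
    positivity
  -- positivity of p and c
  have hppos : 0 < p ρ₀ := by
    rw [hp ρ₀]
    apply div_pos _ ha
    have : ρ₀ < η * ρ₀ := by nlinarith
    nlinarith
  have hcpos : 0 < c ρ₀ := by
    rw [hc ρ₀]
    exact Real.sqrt_pos.mpr (by positivity)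
  -- conclude
  have hA : 0 < γ * p ρ₀ * deriv u ρ₀ := by positivity
  have hB : 0 < c ρ₀ * deriv p ρ₀ := mul_pos hcpos hpderivpos
  rw [hκ ρ₀, abs_div, abs_of_pos (add_pos hA hB), div_lt_one (add_pos hA hB)]
  rw [abs_lt]
  constructor <;> linarith
end

section
/- (Global solvability of the boundary Riemann problem by a single 4-wave; global version of Lemma 2.2 of the paper.) Define W : (0, η ρ_r) → ℝ by W(ρ) = u_r + (2/(γ−1))·( c_r (ρ/ρ_r)^{(γ−1)/2} − c_r ) for ρ ∈ (0, ρ_r] (4-rarefaction branch, along which p/ρ^γ and u − 2c/(γ−1) are constant) and W(ρ) = u_r + c_r √(2/(γ−1)) · (ρ − ρ_r)/√((η ρ_r − ρ) ρ) for ρ ∈ [ρ_r, η ρ_r) (compressive 4-shock branch). Then W is continuous and strictly increasing on (0, η ρ_r), with W(ρ) → u_r − 2c_r/(γ−1) as ρ → 0⁺ and W(ρ) → +∞ as ρ → (η ρ_r)⁻. Consequently, for every velocity v with v > u_r − 2c_r/(γ−1) there exists a unique ρ ∈ (0, η ρ_r) with W(ρ) = v; in particular, the boundary Riemann problem in which a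 piston moving with velocity v borders the state (ρ_r, u_r, p_r) is uniquely solvable by a single 4-wave whose left state has velocity v. -/
open Set Filter Real

private lemma poly_aux (r a b c : ℝ) (hr : 0 < r) (ha : 0 < a) (hb : 0 < b) (hc : 0 < c) :
    a ^ 2 * (c * (r + a + b)) < (a + b) ^ 2 * ((c + b) * (r + a)) := by
  nlinarith [mul_pos ha hb, mul_pos hb hc, mul_pos (mul_pos ha hb) hc,
    mul_pos (mul_pos ha hb) hr, mul_pos (mul_pos hb hc) hr, mul_pos hb hr,
    mul_pos (mul_pos hb hb) hr, mul_pos (mul_pos ha ha) hb,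
    mul_pos (mul_pos (mul_pos ha ha) hb) hc]

/-- Global solvability of the boundary Riemann problem by a single 4-wave
(global version of Lemma 2.2): the 4-wave velocity curve `W` is continuous and
strictly increasing on `(0, η ρ_r)` with limits `u_r − 2c_r/(γ−1)` at `0⁺` and `+∞`
at `(η ρ_r)⁻`, so for every `v > u_r − 2c_r/(γ−1)` there is a unique `ρ` with
`W(ρ) = v`. -/
theorem stmt19 (γ ρr ur pr η cr : ℝ)
    (hγ : 1 < γ) (hρr : 0 < ρr) (hpr : 0 < pr)
    (hη : η = (γ + 1) / (γ - 1))
    (hcr : cr = Real.sqrt (γ * pr / ρr))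
    (W : ℝ → ℝ)
    (hW : ∀ ρ, W ρ = if ρ ≤ ρr
        then ur + 2 / (γ - 1) * (cr * (ρ / ρr) ^ ((γ - 1) / 2) - cr)
        else ur + cr * Real.sqrt (2 / (γ - 1)) * (ρ - ρr)
            / Real.sqrt ((η * ρr - ρ) * ρ)) :
    ContinuousOn W (Set.Ioo 0 (η * ρr))
    ∧ StrictMonoOn W (Set.Ioo 0 (η * ρr))
    ∧ Filter.Tendsto W (nhdsWithin 0 (Set.Ioi 0)) (nhds (ur - 2 * cr / (γ - 1)))
    ∧ Filter.Tendsto W (nhdsWithin (η * ρr) (Set.Iio (η * ρr))) Filter.atTop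
    ∧ ∀ v : ℝ, ur - 2 * cr / (γ - 1) < v →
        ∃! ρ : ℝ, ρ ∈ Set.Ioo 0 (η * ρr) ∧ W ρ = v := by
  have hγ1 : (0:ℝ) < γ - 1 := by linarith
  have hα : (0:ℝ) < (γ - 1) / 2 := by linarith
  have hcrpos : 0 < cr := by
    rw [hcr]; exact Real.sqrt_pos.mpr (by positivity)
  have hη1 : 1 < η := by rw [hη, lt_div_iff₀ hγ1]; linarith
  have hρη : ρr < η * ρr := by nlinarith
  have hηρr : 0 < η * ρr := lt_trans hρr hρη
  set s := Set.Ioo (0:ℝ) (η * ρr) with hs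
  set K := cr * Real.sqrt (2 / (γ - 1)) with hK
  have hKpos : 0 < K := mul_pos hcrpos (Real.sqrt_pos.mpr (by positivity))
  set f : ℝ → ℝ := fun ρ => ur + 2 / (γ - 1) * (cr * (ρ / ρr) ^ ((γ - 1) / 2) - cr) with hf
  set g : ℝ → ℝ := fun ρ => ur + K * (ρ - ρr) / Real.sqrt ((η * ρr - ρ) * ρ) with hg
  have hWf : ∀ ρ, ρ ≤ ρr → W ρ = f ρ := by
    intro ρ h; rw [hW, if_pos h]
  have hWge : ∀ ρ, ρr ≤ ρ → W ρ = g ρ := by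
    intro ρ h
    rcases eq_or_lt_of_le h with h' | h'
    · rw [hW, if_pos h'.symm.le, hg]
      simp only [← h', sub_self, mul_zero, zero_div, add_zero]
      rw [div_self (ne_of_gt hρr), Real.one_rpow]
      ring
    · rw [hW, if_neg (not_le.mpr h'), hg]
  -- continuity of branches
  have hfc : Continuous f := by
    have h1 : Continuous fun ρ : ℝ => (ρ / ρr) ^ ((γ - 1) / 2) :=
      (Real.continuous_rpow_const hα.le).comp (continuous_id.div_const ρr)
    exact continuous_const.add
      (continuous_const.mul ((continuous_const.mul h1).sub continuous_const))
  have hD : ∀ x ∈ s, 0 < (η * ρr - x) * x := by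
    rintro x ⟨hx1, hx2⟩; exact mul_pos (by linarith) hx1
  have hgc : ContinuousOn g s := by
    apply ContinuousOn.add continuousOn_const
    apply ContinuousOn.div (by fun_prop)
      ((Real.continuous_sqrt.comp (by fun_prop)).continuousOn)
    intro x hx
    exact ne_of_gt (Real.sqrt_pos.mpr (hD x hx))
  have hsopen : IsOpen s := isOpen_Ioo
  have hWc : ContinuousOn W s := by
    intro x hx
    rcases lt_trichotomy x ρr with h | h | h
    · have hev : W =ᶠ[nhds x] f := by
        filter_upwards [Iio_mem_nhds h] with y hy using hWf y hy.le
      exact (hfc.continuousAt.congr hev.symm).continuousWithinAt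
    · have hρrs : ρr ∈ s := ⟨hρr, hρη⟩
      have hga : ContinuousAt g x := hgc.continuousAt (hsopen.mem_nhds hx)
      have hl : ContinuousWithinAt W (Iic ρr) x :=
        (hfc.continuousAt.continuousWithinAt).congr (fun y hy => hWf y hy)
          (hWf x h.le)
      have hr : ContinuousWithinAt W (Ici ρr) x :=
        (hga.continuousWithinAt).congr (fun y hy => hWge y hy) (hWge x h.ge)
      have := hl.union hr
      rw [Iic_union_Ici] at this
      exact this.mono (subset_univ s)
    · have hga : ContinuousAt g x := hgc.continuousAt (hsopen.mem_nhds hx)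
      have hev : W =ᶠ[nhds x] g := by
        filter_upwards [Ioi_mem_nhds h] with y hy using hWge y hy.le
      exact (hga.congr hev.symm).continuousWithinAt
  -- monotonicity
  have hmono : StrictMonoOn W s := by
    rintro x hx y hy hxy
    rcases le_or_gt y ρr with hyr | hyr
    · rw [hWf x (hxy.le.trans hyr), hWf y hyr]
      have hlt : (x / ρr) ^ ((γ - 1) / 2) < (y / ρr) ^ ((γ - 1) / 2) :=
        Real.rpow_lt_rpow (by have := hx.1; positivity) (by gcongr) hα
      have h2 : (0:ℝ) < 2 / (γ - 1) := by positivity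
      simp only [hf]
      nlinarith [mul_pos h2 hcrpos]
    · rcases le_or_gt x ρr with hxr | hxr
      · have h1 : W x ≤ ur := by
          rw [hWf x hxr]
          have hle : (x / ρr) ^ ((γ - 1) / 2) ≤ 1 :=
            Real.rpow_le_one (by have := hx.1; positivity) (by rw [div_le_one hρr]; exact hxr) hα.le
          have h2 : (0:ℝ) < 2 / (γ - 1) := by positivity
          simp only [hf]
          nlinarith [mul_pos h2 hcrpos]
        have h2 : ur < W y := by
          rw [hWge y hyr.le]
          have hDy := hD y hy
          have : 0 < K * (y - ρr) / Real.sqrt ((η * ρr - y) * y) := by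
            apply div_pos (mul_pos hKpos (by linarith)) (Real.sqrt_pos.mpr hDy)
          simp only [hg]; linarith
        linarith
      · rw [hWge x hxr.le, hWge y (hxr.trans hxy).le]
        have hDx := hD x hx
        have hDy := hD y hy
        have hsx : 0 < Real.sqrt ((η * ρr - x) * x) := Real.sqrt_pos.mpr hDx
        have hsy : 0 < Real.sqrt ((η * ρr - y) * y) := Real.sqrt_pos.mpr hDy
        have key : (x - ρr) * Real.sqrt ((η * ρr - y) * y)
            < (y - ρr) * Real.sqrt ((η * ρr - x) * x) := by
          apply lt_of_pow_lt_pow_left₀ 2 (mul_nonneg (by linarith) hsx.le)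
          rw [mul_pow, mul_pow, Real.sq_sqrt hDy.le, Real.sq_sqrt hDx.le]
          have hpoly := poly_aux ρr (x - ρr) (y - x) (η * ρr - y) hρr
            (by linarith) (by linarith) (by linarith [hy.2])
          nlinarith [hpoly]
        have hdiv : K * (x - ρr) / Real.sqrt ((η * ρr - x) * x)
            < K * (y - ρr) / Real.sqrt ((η * ρr - y) * y) := by
          rw [div_lt_div_iff₀ hsx hsy]
          nlinarith [mul_lt_mul_of_pos_left key hKpos]
        simp only [hg]; linarith
  -- limit at 0⁺
  have hf0 : f 0 = ur - 2 * cr / (γ - 1) := by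
    simp only [hf, zero_div, Real.zero_rpow (ne_of_gt hα), mul_zero, zero_sub]
    field_simp
    ring
  have hlim0 : Tendsto W (nhdsWithin 0 (Ioi 0)) (nhds (ur - 2 * cr / (γ - 1))) := by
    have hev : W =ᶠ[nhdsWithin 0 (Ioi 0)] f := by
      filter_upwards [mem_nhdsWithin_of_mem_nhds (Iio_mem_nhds hρr)] with y hy
      exact hWf y hy.le
    have : Tendsto f (nhdsWithin 0 (Ioi 0)) (nhds (f 0)) :=
      (hfc.continuousAt.tendsto).mono_left nhdsWithin_le_nhds
    rw [hf0] at this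
    exact this.congr' hev.symm
  -- limit at (η ρr)⁻
  have hlim1 : Tendsto W (nhdsWithin (η * ρr) (Iio (η * ρr))) atTop := by
    set l := nhdsWithin (η * ρr) (Iio (η * ρr)) with hl
    have hevgt : ∀ᶠ ρ in l, ρr < ρ := mem_nhdsWithin_of_mem_nhds (Ioi_mem_nhds hρη)
    have hevlt : ∀ᶠ ρ in l, ρ < η * ρr := self_mem_nhdsWithin
    have hnum : Tendsto (fun ρ => K * (ρ - ρr)) l (nhds (K * (η * ρr - ρr))) :=
      ((continuous_const.mul (continuous_id.sub continuous_const)).tendsto _).mono_left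
        nhdsWithin_le_nhds
    have hden : Tendsto (fun ρ => Real.sqrt ((η * ρr - ρ) * ρ)) l (nhdsWithin 0 (Ioi 0)) := by
      rw [tendsto_nhdsWithin_iff]
      constructor
      · have hc : Continuous fun ρ : ℝ => Real.sqrt ((η * ρr - ρ) * ρ) :=
          Real.continuous_sqrt.comp (by fun_prop)
        have := (hc.tendsto (η * ρr)).mono_left (nhdsWithin_le_nhds (s := Iio (η * ρr)))
        simpa using this
      · filter_upwards [hevgt, hevlt] with ρ h1 h2
        exact Real.sqrt_pos.mpr (mul_pos (by linarith) (by linarith))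
    have hinv : Tendsto (fun ρ => (Real.sqrt ((η * ρr - ρ) * ρ))⁻¹) l atTop :=
      hden.inv_tendsto_nhdsGT_zero
    have hmul : Tendsto (fun ρ => K * (ρ - ρr) * (Real.sqrt ((η * ρr - ρ) * ρ))⁻¹) l atTop :=
      hnum.pos_mul_atTop (by nlinarith) hinv
    have hg' : Tendsto g l atTop := by
      apply tendsto_atTop_add_const_left _ ur
      refine hmul.congr fun ρ => ?_
      rw [div_eq_mul_inv]
    refine hg'.congr' ?_
    filter_upwards [hevgt] with ρ h1
    exact (hWge ρ h1.le).symm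
  refine ⟨hWc, hmono, hlim0, hlim1, ?_⟩
  intro v hv
  have hmemlow : ∀ᶠ ρ in nhdsWithin 0 (Ioi (0:ℝ)), ρ ∈ s := by
    filter_upwards [mem_nhdsWithin_of_mem_nhds (Iio_mem_nhds hηρr),
      self_mem_nhdsWithin] with ρ h1 h2
    exact ⟨h2, h1⟩
  obtain ⟨a, haW, has⟩ := ((hlim0.eventually_lt_const hv).and hmemlow).exists
  have hmemhigh : ∀ᶠ ρ in nhdsWithin (η * ρr) (Iio (η * ρr)), ρ ∈ s ∧ a < ρ := by
    filter_upwards [mem_nhdsWithin_of_mem_nhds (Ioi_mem_nhds hρη),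
      mem_nhdsWithin_of_mem_nhds (Ioi_mem_nhds has.2), self_mem_nhdsWithin] with ρ h1 h2 h3
    exact ⟨⟨lt_trans hρr h1, h3⟩, h2⟩
  obtain ⟨b, hbW, hbs, hab⟩ := ((hlim1.eventually_gt_atTop v).and hmemhigh).exists
  have hsub : Icc a b ⊆ s := fun z hz => ⟨lt_of_lt_of_le has.1 hz.1, lt_of_le_of_lt hz.2 hbs.2⟩
  have hivt := intermediate_value_Icc hab.le (hWc.mono hsub)
  obtain ⟨ρ, hρmem, hWρ⟩ := hivt ⟨haW.le, hbW.le⟩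
  refine ⟨ρ, ⟨hsub hρmem, hWρ⟩, ?_⟩
  rintro ρ' ⟨hρ's, hW'⟩
  exact hmono.injOn hρ's (hsub hρmem) (hW'.trans hWρ.symm)
end
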